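/- arXiv:1409.6949 — 2 statements merged into one kernel-verified Lean document; each statement's English description precedes it below -/
import Mathlib

section
/- Let G be a finite simple graph of class two and let C be a minimum vertex cover of G. Then for every nonempty independent set A ⊆ C one has |N_{V−C}(A)| > |A|. -/
open Finset

/-- `C` is a vertex cover of `G`: every edge has an endpoint in `C`. -/
def IsCover {V : Type*} (G : SimpleGraph V) (C : Finset V) : Prop :=
  ∀ ⦃u v : V⦄, G.Adj u v → u ∈ C ∨ v ∈ C

/-- `A` is an independent set of `G`: no two of its vertices are adjacent. -/
def IsIndep {V : Type*} (G : SimpleGraph V) (A : Finset V) : Prop :=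
  ∀ ⦃u : V⦄, u ∈ A → ∀ ⦃v : V⦄, v ∈ A → ¬ G.Adj u v

/-- The vertex cover number β(G): the minimum size of a vertex cover of `G`. -/
noncomputable def coverNumber {V : Type*} [Fintype V] (G : SimpleGraph V) : ℕ :=
  sInf {n : ℕ | ∃ C : Finset V, IsCover G C ∧ C.card = n}

/-- `G` admits a feasible schedule for a boat of capacity `b`, in the sense of the
structure theorem of Csorba, Hurkens and Woeginger. -/
def Feasible {V : Type*} [Fintype V] [DecidableEq V] (G : SimpleGraph V) (b : ℕ) : Prop :=
  ∃ X₁ X₂ X₃ Y₁ Y₂ : Finset V,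
    Disjoint X₁ X₂ ∧ Disjoint X₁ X₃ ∧ Disjoint X₂ X₃ ∧
    IsIndep G (X₁ ∪ X₂ ∪ X₃) ∧
    Y₁.Nonempty ∧ Y₂.Nonempty ∧
    Y₁ ⊆ Finset.univ \ (X₁ ∪ X₂ ∪ X₃) ∧ Y₂ ⊆ Finset.univ \ (X₁ ∪ X₂ ∪ X₃) ∧
    (Finset.univ \ (X₁ ∪ X₂ ∪ X₃)).card ≤ b ∧
    IsIndep G (X₁ ∪ Y₁) ∧ IsIndep G (X₂ ∪ Y₂) ∧
    X₃.card ≤ Y₁.card + Y₂.card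

/-- `G` is of class one if it has a feasible schedule for boat capacity β(G). -/
def ClassOne {V : Type*} [Fintype V] [DecidableEq V] (G : SimpleGraph V) : Prop :=
  Feasible G (coverNumber G)

/-- `G` is of class two if it is not of class one. -/
def ClassTwo {V : Type*} [Fintype V] [DecidableEq V] (G : SimpleGraph V) : Prop :=
  ¬ ClassOne G

/-- `extNbr G C S` is N_{V−C}(S): the set of vertices outside `C` that are adjacent to
at least one vertex of `S`. -/
def extNbr {V : Type*} [Fintype V] [DecidableEq V] (G : SimpleGraph V) [DecidableRel G.Adj]
    (C S : Finset V) : Finset V :=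
  Finset.univ.filter (fun v => v ∉ C ∧ ∃ s ∈ S, G.Adj s v)

/-!
Suppose `|N_{V−C}(A)| ≤ 2|A|`. The complement `V − C` of a vertex cover is independent; split it
as `X₃ = N_{V−C}(A)` and `X₁ = (V − C) − X₃`, and take `X₂ = ∅`, `Y₁ = Y₂ = A`. Then `Y = C` has
size `β(G)`, `X₁ ∪ A` is independent because no vertex of `X₁` sees `A`, and `|X₃| ≤ |Y₁| + |Y₂|`.
So `G` is of class one; in particular a class two graph has `|N_{V−C}(A)| > 2|A| ≥ |A|`.
-/

section

variable {V : Type*} {G : SimpleGraph V}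

theorem IsIndep.union {A B : Finset V} [DecidableEq V] (hA : IsIndep G A) (hB : IsIndep G B)
    (hAB : ∀ a ∈ A, ∀ b ∈ B, ¬ G.Adj a b) : IsIndep G (A ∪ B) := by
  intro u hu v hv huv
  rcases mem_union.mp hu with hu | hu <;> rcases mem_union.mp hv with hv | hv
  · exact hA hu hv huv
  · exact hAB u hu v hv huv
  · exact hAB v hv u hu huv.symm
  · exact hB hu hv huv

theorem IsIndep.mono {A B : Finset V} (hB : IsIndep G B) (hAB : A ⊆ B) : IsIndep G A :=
  fun _ hu _ hv => hB (hAB hu) (hAB hv)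

theorem IsCover.isIndep_compl [Fintype V] [DecidableEq V] {C : Finset V} (hC : IsCover G C) :
    IsIndep G (univ \ C) := by
  intro u hu v hv huv
  rcases hC huv with h | h
  · exact (mem_sdiff.mp hu).2 h
  · exact (mem_sdiff.mp hv).2 h

section extNbr

variable [Fintype V] [DecidableEq V] [DecidableRel G.Adj]

@[simp]
theorem mem_extNbr {C S : Finset V} {v : V} :
    v ∈ extNbr G C S ↔ v ∉ C ∧ ∃ s ∈ S, G.Adj s v := by
  simp [extNbr]

theorem extNbr_subset_compl (C S : Finset V) : extNbr G C S ⊆ univ \ C := fun v hv => by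
  simpa using (mem_extNbr.mp hv).1

theorem isIndep_compl_sdiff_extNbr_union {C A : Finset V} (hC : IsCover G C)
    (hA : IsIndep G A) : IsIndep G ((univ \ C) \ extNbr G C A ∪ A) := by
  refine (hC.isIndep_compl.mono sdiff_subset).union hA fun v hv a ha hva => ?_
  obtain ⟨hvC, hvN⟩ := mem_sdiff.mp hv
  exact hvN (mem_extNbr.mpr ⟨(mem_sdiff.mp hvC).2, a, ha, hva.symm⟩)

theorem feasible_of_card_extNbr_le_two_mul {C A : Finset V} (hC : IsCover G C) (hAC : A ⊆ C)
    (hA : A.Nonempty) (hAind : IsIndep G A) (hcard : (extNbr G C A).card ≤ 2 * A.card) :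
    Feasible G C.card := by
  set N := extNbr G C A
  have hX : (univ \ C) \ N ∪ ∅ ∪ N = univ \ C := by
    rw [union_empty, sdiff_union_of_subset (extNbr_subset_compl C A)]
  have hY : univ \ (univ \ C) = C := Finset.sdiff_sdiff_eq_self (subset_univ C)
  refine ⟨(univ \ C) \ N, ∅, N, A, A, disjoint_empty_right _, sdiff_disjoint,
    disjoint_empty_left _, ?_, hA, hA, ?_, ?_, ?_, isIndep_compl_sdiff_extNbr_union hC hAind,
    ?_, by omega⟩
  · rw [hX]; exact hC.isIndep_compl
  · rwa [hX, hY]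
  · rwa [hX, hY]
  · rw [hX, hY]
  · rwa [empty_union]

end extNbr

end

/-- If `G` is of class two and `C` is a minimum vertex cover, then every nonempty
independent set `A ⊆ C` satisfies `|N_{V−C}(A)| > |A|`. -/
theorem card_lt_card_extNbr_of_classTwo {V : Type*} [Fintype V] [DecidableEq V]
    (G : SimpleGraph V) [DecidableRel G.Adj] (C : Finset V)
    (hC : IsCover G C) (hmin : C.card = coverNumber G) (h2 : ClassTwo G) :
    ∀ A ⊆ C, A.Nonempty → IsIndep G A → A.card < (extNbr G C A).card := by
  intro A hAC hA hAind
  by_contra hle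
  apply h2
  unfold ClassOne
  rw [← hmin]
  exact feasible_of_card_extNbr_le_two_mul hC hAC hA hAind (by omega)
end

section
/- Let T be a finite tree (a connected acyclic simple graph) with at least one edge. Then T is of class two if and only if there exists n ≥ 3 such that T is isomorphic to the star K_{1,n} (the complete bipartite graph with parts of sizes 1 and n). -/
open Finset

/-! When β(T) ≥ 2, pick two vertices y₁, y₂ of a minimum cover C and put the independent set
V − C into X₁, X₂, X₃ according to adjacency with y₁ and y₂, with Y₁ = {y₁}, Y₂ = {y₂}: X₃ consists
of common neighbours of y₁ and y₂, of which a forest has at most one. When β(T) = 1, T is a star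
K_{1,n}; for n ≥ 2 the only vertex cover of size 1 is the centre, so a schedule for a boat of
capacity 1 has Y = Y₁ = Y₂ = {centre}, which forces X₁ = X₂ = ∅ and X₃ = all n leaves: this is
feasible exactly when n ≤ 2. -/

section

variable {V : Type*} {G : SimpleGraph V}

theorem isIndep_union_singleton [DecidableEq V] {A : Finset V} {y : V} (hA : IsIndep G A)
    (hy : ∀ a ∈ A, ¬ G.Adj a y) : IsIndep G (A ∪ {y}) := by
  intro u hu v hv
  simp only [mem_union, mem_singleton] at hu hv
  rcases hu with hu | rfl <;> rcases hv with hv | rfl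
  exacts [hA hu hv, hy u hu, fun h => hy v hv h.symm, G.irrefl]

theorem isIndep_singleton (y : V) : IsIndep G {y} := by
  intro u hu v hv
  rw [mem_singleton] at hu hv
  subst hu hv
  exact G.irrefl

theorem isIndep_compl_iff_isCover [Fintype V] [DecidableEq V] {C : Finset V} :
    IsIndep G (univ \ C) ↔ IsCover G C := by
  simp only [IsIndep, IsCover, mem_sdiff, mem_univ, true_and]
  refine ⟨fun h u v huv => ?_, fun h u hu v hv huv => (h huv).elim hu hv⟩
  by_contra hC
  push Not at hC
  exact h hC.1 hC.2 huv

variable [Fintype V]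

variable (G) in
theorem exists_isCover_card_eq_coverNumber :
    ∃ C : Finset V, IsCover G C ∧ C.card = coverNumber G :=
  Nat.sInf_mem (s := {n | ∃ C : Finset V, IsCover G C ∧ C.card = n})
    ⟨_, univ, fun u _ _ => Or.inl (mem_univ u), rfl⟩

theorem coverNumber_le_card {C : Finset V} (hC : IsCover G C) : coverNumber G ≤ C.card :=
  Nat.sInf_le ⟨C, hC, rfl⟩

theorem coverNumber_pos {u v : V} (huv : G.Adj u v) : 0 < coverNumber G := by
  obtain ⟨C, hC, hcard⟩ := exists_isCover_card_eq_coverNumber G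
  rw [← hcard, card_pos]
  exact (hC huv).elim (fun hu => ⟨u, hu⟩) fun hv => ⟨v, hv⟩

end

theorem SimpleGraph.IsAcyclic.commonNeighbors_subsingleton {V : Type*} {G : SimpleGraph V}
    (hG : G.IsAcyclic) {v w : V} (hvw : v ≠ w) : (G.commonNeighbors v w).Subsingleton := by
  intro a ha b hb
  rw [SimpleGraph.mem_commonNeighbors] at ha hb
  have hpath {x : V} (hv : G.Adj v x) (hw : G.Adj w x) :
      (SimpleGraph.Walk.cons hv (.cons hw.symm .nil)).IsPath := by
    simp [SimpleGraph.Walk.isPath_def, hv.ne, hw.ne', hvw]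
  have := (hG.subsingleton_path v w).elim ⟨_, hpath ha.1 ha.2⟩ ⟨_, hpath hb.1 hb.2⟩
  simpa using congrArg (fun p : G.Path v w => p.val.support) this

section

variable {V : Type*} [Fintype V] [DecidableEq V] {G : SimpleGraph V}

theorem feasible_card_of_isCover (hG : G.IsAcyclic) {C : Finset V} (hC : IsCover G C)
    (hC2 : 2 ≤ C.card) : Feasible G C.card := by
  classical
  obtain ⟨y₁, hy₁, y₂, hy₂, hne⟩ := one_lt_card.mp hC2
  have hX : IsIndep G (univ \ C) := isIndep_compl_iff_isCover.2 hC
  refine ⟨(univ \ C).filter (¬ G.Adj · y₁), (univ \ C).filter (fun x => G.Adj x y₁ ∧ ¬ G.Adj x y₂),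
    (univ \ C).filter (fun x => G.Adj x y₁ ∧ G.Adj x y₂), {y₁}, {y₂}, ?_⟩
  have hunion : (univ \ C).filter (¬ G.Adj · y₁) ∪
      (univ \ C).filter (fun x => G.Adj x y₁ ∧ ¬ G.Adj x y₂) ∪
      (univ \ C).filter (fun x => G.Adj x y₁ ∧ G.Adj x y₂) = univ \ C := by
    ext x
    simp only [mem_union, mem_filter]
    tauto
  rw [hunion, Finset.sdiff_sdiff_eq_self (subset_univ C)]
  refine ⟨disjoint_filter.2 fun _ _ h1 h2 => h1 h2.1, disjoint_filter.2 fun _ _ h1 h3 => h1 h3.1,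
    disjoint_filter.2 fun _ _ h2 h3 => h2.2 h3.2, hX, singleton_nonempty y₁,
    singleton_nonempty y₂, singleton_subset_iff.2 hy₁, singleton_subset_iff.2 hy₂, le_rfl,
    isIndep_union_singleton (hX.mono (filter_subset _ _)) fun x hx => (mem_filter.1 hx).2,
    isIndep_union_singleton (hX.mono (filter_subset _ _)) fun x hx => (mem_filter.1 hx).2.2, ?_⟩
  have hX₃ : ((univ \ C).filter (fun x => G.Adj x y₁ ∧ G.Adj x y₂)).card ≤ 1 := by
    refine card_le_one.2 fun a ha b hb => hG.commonNeighbors_subsingleton hne ?_ ?_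
    exacts [G.mem_commonNeighbors.2 ((mem_filter.1 ha).2.imp .symm .symm),
      G.mem_commonNeighbors.2 ((mem_filter.1 hb).2.imp .symm .symm)]
  simp only [card_singleton]
  omega

theorem classOne_of_two_le_coverNumber (hG : G.IsAcyclic) (h : 2 ≤ coverNumber G) :
    ClassOne G := by
  obtain ⟨C, hC, hcard⟩ := exists_isCover_card_eq_coverNumber G
  rw [ClassOne, ← hcard]
  exact feasible_card_of_isCover hG hC (hcard ▸ h)

end

def IsStarCenter {V : Type*} (G : SimpleGraph V) (c : V) : Prop :=
  ∀ u v, G.Adj u v ↔ u ≠ v ∧ (u = c ∨ v = c)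

theorem isStarCenter_completeBipartiteGraph {β : Type*} :
    IsStarCenter (completeBipartiteGraph (Fin 1) β) (Sum.inl 0) := by
  rintro (a | a) (b | b) <;> simp [Fin.fin_one_eq_zero]

theorem isStarCenter_of_isCover_singleton {V : Type*} [DecidableEq V] {G : SimpleGraph V}
    (hG : G.Connected) {c : V} (hc : IsCover G {c}) : IsStarCenter G c := by
  intro u v
  refine ⟨fun huv => ⟨huv.ne, by simpa using hc huv⟩, ?_⟩
  suffices hcenter : ∀ w, w ≠ c → G.Adj c w by
    rintro ⟨huv, rfl | rfl⟩
    exacts [hcenter v huv.symm, (hcenter u huv).symm]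
  intro w hw
  obtain ⟨p⟩ := hG.preconnected w c
  cases p with
  | nil => exact absurd rfl hw
  | cons h _ =>
    rcases hc h with h' | h'
    · exact absurd (mem_singleton.1 h') hw
    · rw [mem_singleton.1 h'] at h
      exact h.symm

namespace IsStarCenter

variable {V W : Type*} {G : SimpleGraph V} {c : V}

theorem adj (h : IsStarCenter G c) {v : V} (hv : v ≠ c) : G.Adj c v :=
  (h c v).2 ⟨hv.symm, Or.inl rfl⟩

theorem isCover [DecidableEq V] (h : IsStarCenter G c) : IsCover G {c} := fun u v huv => by
  simpa using ((h u v).1 huv).2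

theorem of_iso {H : SimpleGraph W} {d : W} (h : IsStarCenter H d) (f : G ≃g H) :
    IsStarCenter G (f.symm d) := by
  intro u v
  rw [← f.map_adj_iff, h, f.injective.ne_iff, ← RelIso.eq_symm_apply, ← RelIso.eq_symm_apply]

theorem nonempty_iso [Fintype V] [Fintype W] {H : SimpleGraph W} {d : W}
    (hG : IsStarCenter G c) (hH : IsStarCenter H d) (hcard : Fintype.card V = Fintype.card W) :
    Nonempty (G ≃g H) := by
  classical
  let e₀ := Fintype.equivOfCardEq hcard
  let e := e₀.trans (Equiv.swap (e₀ c) d)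
  have hc : e c = d := by simp [e]
  refine ⟨⟨e, fun {u v} => ?_⟩⟩
  rw [hH, hG, ← hc, e.injective.ne_iff, e.injective.eq_iff, e.injective.eq_iff]

variable [Fintype V] [DecidableEq V]

theorem mem_of_isCover (h : IsStarCenter G c) {C : Finset V} (hC : IsCover G C)
    (hcard : C.card + 1 < Fintype.card V) : c ∈ C := by
  by_contra hc
  have hleaves : univ.erase c ⊆ C := fun v hv =>
    (hC (h.adj (ne_of_mem_erase hv))).resolve_left hc
  have := card_le_card hleaves
  rw [card_erase_of_mem (mem_univ c), card_univ] at this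
  omega

theorem coverNumber_eq_one (h : IsStarCenter G c) (hV : 2 ≤ Fintype.card V) :
    coverNumber G = 1 := by
  obtain ⟨v, hv⟩ := Fintype.exists_ne_of_one_lt_card hV c
  have hle := coverNumber_le_card h.isCover
  have hpos := coverNumber_pos (h.adj hv)
  rw [card_singleton] at hle
  omega

theorem feasible_one (h : IsStarCenter G c) (hV : Fintype.card V ≤ 3) : Feasible G 1 := by
  refine ⟨∅, ∅, univ \ {c}, {c}, {c}, ?_⟩
  simp only [empty_union, Finset.sdiff_sdiff_eq_self (subset_univ _)]
  refine ⟨disjoint_empty_left _, disjoint_empty_left _, disjoint_empty_left _,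
    isIndep_compl_iff_isCover.2 h.isCover, singleton_nonempty c, singleton_nonempty c,
    subset_rfl, subset_rfl, (card_singleton c).le, isIndep_singleton c, isIndep_singleton c, ?_⟩
  rw [card_univ_sdiff, card_singleton]
  omega

theorem not_feasible_one (h : IsStarCenter G c) (hV : 4 ≤ Fintype.card V) :
    ¬ Feasible G 1 := by
  rintro ⟨X₁, X₂, X₃, Y₁, Y₂, -, -, -, hX, hY₁, hY₂, hY₁Y, hY₂Y, hYcard, hX₁Y₁, hX₂Y₂, hX₃card⟩
  set X := X₁ ∪ X₂ ∪ X₃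
  have hYcover : IsCover G (univ \ X) :=
    isIndep_compl_iff_isCover.1 (by rwa [Finset.sdiff_sdiff_eq_self (subset_univ X)])
  have hcY : c ∈ univ \ X := h.mem_of_isCover hYcover (by omega)
  have hY : univ \ X = {c} :=
    eq_singleton_iff_unique_mem.2 ⟨hcY, fun y hy => card_le_one.1 hYcard y hy c hcY⟩
  have hY₁c : Y₁ = {c} := hY₁.subset_singleton_iff.1 (hY ▸ hY₁Y)
  have hY₂c : Y₂ = {c} := hY₂.subset_singleton_iff.1 (hY ▸ hY₂Y)
  have hleaf : ∀ x ∈ X, G.Adj x c := fun x hx =>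
    (h.adj fun hxc => (mem_sdiff.1 hcY).2 (hxc ▸ hx)).symm
  have hX₁ : X₁ = ∅ := eq_empty_of_forall_notMem fun x hx =>
    hX₁Y₁ (mem_union_left _ hx) (mem_union_right _ (hY₁c ▸ mem_singleton_self c))
      (hleaf x (by simp [X, hx]))
  have hX₂ : X₂ = ∅ := eq_empty_of_forall_notMem fun x hx =>
    hX₂Y₂ (mem_union_left _ hx) (mem_union_right _ (hY₂c ▸ mem_singleton_self c))
      (hleaf x (by simp [X, hx]))
  have hXcard : X.card = Fintype.card V - 1 := by
    have := card_univ_sdiff X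
    rw [hY, card_singleton] at this
    have := card_le_univ X
    omega
  simp only [X, hX₁, hX₂, empty_union] at hXcard
  rw [hY₁c, hY₂c, card_singleton] at hX₃card
  omega

theorem classTwo_iff (h : IsStarCenter G c) (hV : 2 ≤ Fintype.card V) :
    ClassTwo G ↔ 4 ≤ Fintype.card V := by
  rw [ClassTwo, ClassOne, h.coverNumber_eq_one hV]
  exact ⟨fun hG => by_contra fun h4 => hG (h.feasible_one (by omega)), h.not_feasible_one⟩

end IsStarCenter

/-- A finite tree with at least one edge is of class two iff it is isomorphic to a
star `K_{1,n}` for some `n ≥ 3`. -/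
theorem tree_classTwo_iff_star {V : Type*} [Fintype V] [DecidableEq V]
    (T : SimpleGraph V) (hconn : T.Connected) (hacyclic : T.IsAcyclic)
    (hedge : ∃ u v, T.Adj u v) :
    ClassTwo T ↔
      ∃ n : ℕ, 3 ≤ n ∧ Nonempty (T ≃g completeBipartiteGraph (Fin 1) (Fin n)) := by
  obtain ⟨u, v, huv⟩ := hedge
  have hV : 2 ≤ Fintype.card V := Fintype.one_lt_card_iff_nontrivial.2 ⟨u, v, huv.ne⟩
  constructor
  · intro hT
    have hβ : coverNumber T = 1 := by
      have := coverNumber_pos huv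
      by_contra hne
      exact hT (classOne_of_two_le_coverNumber hacyclic (by omega))
    obtain ⟨C, hC, hCcard⟩ := exists_isCover_card_eq_coverNumber T
    obtain ⟨c, rfl⟩ := card_eq_one.1 (hCcard.trans hβ)
    have hc := isStarCenter_of_isCover_singleton hconn hC
    have h4 := (hc.classTwo_iff hV).1 hT
    refine ⟨Fintype.card V - 1, by omega, hc.nonempty_iso isStarCenter_completeBipartiteGraph ?_⟩
    simp only [Fintype.card_sum, Fintype.card_fin]
    omega
  · rintro ⟨n, hn, ⟨f⟩⟩
    rw [(isStarCenter_completeBipartiteGraph.of_iso f).classTwo_iff hV,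
      Fintype.card_congr f.toEquiv, Fintype.card_sum, Fintype.card_fin, Fintype.card_fin]
    omega
end
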